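/- Let X := { f ∈ H¹(ℝ) : x ↦ x² f(x) ∈ L²(ℝ) } with norm ‖f‖²_X := ‖f′‖²_{L²} + ∫_ℝ |f(x)|² (1 + x⁴) dx. Then there exists a constant C > 0 such that for every f ∈ X, Σ_{k=0}^∞ ‖f‖_{L^∞(k, k+1)} ≤ C ‖f‖_X; consequently, for every signed Borel measure ν on [0,∞), |∫₀^∞ f dν| ≤ C ‖f‖_X · sup_{x ≥ 0} |ν|([x, x+1]). -/

import Mathlib

open MeasureTheory Set Filter
open scoped ENNReal Topology

noncomputable section

/-- Membership in `X = { f ∈ H¹(ℝ) : x² f(x) ∈ L²(ℝ) }` (with the continuous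
representative, which is differentiable with square-integrable derivative). -/
def MemX (f : ℝ → ℝ) : Prop :=
  Differentiable ℝ f ∧ MemLp f 2 (volume : Measure ℝ) ∧
    MemLp (deriv f) 2 (volume : Measure ℝ) ∧
    MemLp (fun x => x ^ 2 * f x) 2 (volume : Measure ℝ)

/-- The norm `‖f‖²_X = ‖f′‖²_{L²} + ∫ |f(x)|² (1 + x⁴) dx`. -/
def normX (f : ℝ → ℝ) : ℝ :=
  Real.sqrt (((eLpNorm (deriv f) 2 (volume : Measure ℝ)).toReal) ^ 2 +
    ∫ x : ℝ, (f x) ^ 2 * (1 + x ^ 4))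

/-! On a unit interval `I = [a, a + 1]`, the fundamental theorem of calculus for `f²`, averaged
over `I`, together with `2 |f f'| ≤ w f² + f'² / w`, gives
`sup_I f² ≤ (1 + w) ∫_I f² + (1 / w) ∫_I f'²` for every `w > 0`. With `w = (k + 1)²` on
`I_k = [k, k + 1]`, the weight `1 + x⁴` absorbs the factor `(1 + w) w`, so
`sup_{I_k} |f| ≤ (k + 1)⁻¹ (16 ∫_{I_k} f² (1 + x⁴) + ∫_{I_k} f'²)^{1/2}`, and Cauchy–Schwarz against
`∑ (k + 1)⁻²` bounds the sum of these by `4 (∑ (k + 1)⁻²)^{1/2} ‖f‖_X`. The measure estimate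
follows by integrating `|f|` over each `I_k`, which `P + N` charges by at most the supremum. -/

open scoped Interval

theorem Real.summable_and_tsum_sqrt_mul_le {ι : Type*} {a b : ι → ℝ} (ha : 0 ≤ a) (hb : 0 ≤ b)
    (hsa : Summable a) (hsb : Summable b) :
    Summable (fun i => √(a i * b i)) ∧ ∑' i, √(a i * b i) ≤ √(∑' i, a i) * √(∑' i, b i) := by
  have hfin (s : Finset ι) : ∑ i ∈ s, √(a i * b i) ≤ √(∑' i, a i) * √(∑' i, b i) := by
    simp_rw [Real.sqrt_mul (ha _)]
    refine (Real.sum_sqrt_mul_sqrt_le s ha hb).trans (mul_le_mul ?_ ?_ (Real.sqrt_nonneg _)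
      (Real.sqrt_nonneg _))
    · exact Real.sqrt_le_sqrt (hsa.sum_le_tsum s fun i _ => ha i)
    · exact Real.sqrt_le_sqrt (hsb.sum_le_tsum s fun i _ => hb i)
  exact ⟨summable_of_sum_le (fun _ => Real.sqrt_nonneg _) hfin,
    Real.tsum_le_of_sum_le (fun _ => Real.sqrt_nonneg _) hfin⟩

theorem MeasureTheory.MemLp.toReal_eLpNorm_two_sq {α : Type*} [MeasurableSpace α]
    {μ : Measure α} {g : α → ℝ} (hg : MemLp g 2 μ) :
    (eLpNorm g 2 μ).toReal ^ 2 = ∫ x, g x ^ 2 ∂μ := by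
  rw [hg.eLpNorm_eq_integral_rpow_norm two_ne_zero ENNReal.ofNat_ne_top,
    ENNReal.toReal_ofReal (by positivity)]
  simp only [ENNReal.toReal_ofNat, Real.rpow_two, Real.norm_eq_abs, sq_abs]
  exact_mod_cast Real.rpow_inv_natCast_pow (integral_nonneg fun x => sq_nonneg (g x)) two_ne_zero

lemma two_mul_abs_mul_le {w : ℝ} (hw : 0 < w) (a b : ℝ) :
    2 * |a * b| ≤ w * a ^ 2 + b ^ 2 / w := by
  rw [abs_mul, ← sq_abs a, ← sq_abs b, ← sub_nonneg]
  have hsq : w * |a| ^ 2 + |b| ^ 2 / w - 2 * (|a| * |b|) = (w * |a| - |b|) ^ 2 / w := by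
    field_simp
    ring
  rw [hsq]
  positivity

lemma summable_and_tsum_setIntegral_Icc_natCast_le {g : ℝ → ℝ} (hg : Integrable g)
    (hg0 : 0 ≤ g) :
    Summable (fun k : ℕ => ∫ y in Icc (k : ℝ) (k + 1), g y) ∧
      ∑' k : ℕ, ∫ y in Icc (k : ℝ) (k + 1), g y ≤ ∫ y, g y := by
  have hfin (n : ℕ) : ∑ k ∈ Finset.range n, ∫ y in Icc (k : ℝ) (k + 1), g y ≤ ∫ y, g y := by
    have hadj := intervalIntegral.sum_integral_adjacent_intervals (a := fun k : ℕ => (k : ℝ))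
      (n := n) (f := g) (μ := volume) fun k _ => hg.intervalIntegrable
    simp only [Nat.cast_add, Nat.cast_one, Nat.cast_zero] at hadj
    calc ∑ k ∈ Finset.range n, ∫ y in Icc (k : ℝ) (k + 1), g y
        = ∑ k ∈ Finset.range n, ∫ y in (k : ℝ)..(k + 1), g y := by
          refine Finset.sum_congr rfl fun k _ => ?_
          rw [integral_Icc_eq_integral_Ioc, intervalIntegral.integral_of_le (by linarith)]
      _ = ∫ y in (0 : ℝ)..n, g y := hadj
      _ ≤ ∫ y, g y := by
          rw [intervalIntegral.integral_of_le (Nat.cast_nonneg n)]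
          exact setIntegral_le_integral hg (Eventually.of_forall hg0)
  have hnonneg (k : ℕ) : 0 ≤ ∫ y in Icc (k : ℝ) (k + 1), g y :=
    setIntegral_nonneg measurableSet_Icc fun y _ => hg0 y
  exact ⟨summable_of_sum_range_le hnonneg hfin, Real.tsum_le_of_sum_range_le hnonneg hfin⟩

section LocalBound

variable {f : ℝ → ℝ} (hf : Differentiable ℝ f)
include hf

lemma sq_sub_sq_le_setIntegral {a b w : ℝ} (hw : 0 < w)
    (hf' : IntegrableOn (fun t => deriv f t ^ 2) (Icc a b)) {x y : ℝ} (hx : x ∈ Icc a b)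
    (hy : y ∈ Icc a b) :
    f x ^ 2 - f y ^ 2 ≤ ∫ t in Icc a b, (w * f t ^ 2 + deriv f t ^ 2 / w) := by
  set h := fun t => w * f t ^ 2 + deriv f t ^ 2 / w
  have hh : IntegrableOn h (Icc a b) :=
    ((hf.continuous.pow 2).integrableOn_Icc.const_mul w).add (hf'.div_const w)
  have hh0 : ∀ t, 0 ≤ h t := fun t => by positivity
  have hdom : ∀ t, ‖2 * f t * deriv f t‖ ≤ h t := fun t => by
    simpa only [Real.norm_eq_abs, mul_assoc, abs_mul, abs_two] using
      two_mul_abs_mul_le hw (f t) (deriv f t)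
  have hint : IntegrableOn (fun t => 2 * f t * deriv f t) (Icc a b) :=
    hh.mono' ((continuous_const.mul hf.continuous).measurable.mul
      (measurable_deriv f)).aestronglyMeasurable (Eventually.of_forall hdom)
  have hsub : uIcc y x ⊆ Icc a b := uIcc_subset_Icc hy hx
  have hFTC : ∫ t in y..x, 2 * f t * deriv f t = f x ^ 2 - f y ^ 2 := by
    refine intervalIntegral.integral_eq_sub_of_hasDerivAt (f := fun t => f t ^ 2) (fun t _ => ?_)
      (hint.mono_set hsub).intervalIntegrable
    simpa using (hf t).hasDerivAt.fun_pow 2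
  calc f x ^ 2 - f y ^ 2 = ∫ t in y..x, 2 * f t * deriv f t := hFTC.symm
    _ ≤ ∫ t in Ι y x, ‖2 * f t * deriv f t‖ :=
      (Real.le_norm_self _).trans intervalIntegral.norm_integral_le_integral_norm_uIoc
    _ ≤ ∫ t in Ι y x, h t :=
      integral_mono_of_nonneg (Eventually.of_forall fun _ => norm_nonneg _)
        (hh.mono_set (uIoc_subset_uIcc.trans hsub)) (Eventually.of_forall hdom)
    _ ≤ ∫ t in Icc a b, h t :=
      setIntegral_mono_set hh (Eventually.of_forall hh0) (uIoc_subset_uIcc.trans hsub).eventuallyLE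

lemma sq_le_setIntegral_Icc_add_one {a w : ℝ} (hw : 0 < w)
    (hf' : IntegrableOn (fun t => deriv f t ^ 2) (Icc a (a + 1))) {x : ℝ}
    (hx : x ∈ Icc a (a + 1)) :
    f x ^ 2 ≤ (1 + w) * (∫ t in Icc a (a + 1), f t ^ 2) +
      (∫ t in Icc a (a + 1), deriv f t ^ 2) / w := by
  have hf2 : IntegrableOn (fun t => f t ^ 2) (Icc a (a + 1)) :=
    (hf.continuous.pow 2).integrableOn_Icc
  have hvol : volume.real (Icc a (a + 1)) = 1 := by simp [measureReal_def]
  have havg := setIntegral_ge_of_const_le (μ := volume) measurableSet_Icc (by simp)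
    (fun y hy => sub_le_comm.1 (sq_sub_sq_le_setIntegral hf hw hf' hx hy)) hf2
  rw [hvol, one_smul, integral_add (hf2.const_mul w) (hf'.div_const w), integral_const_mul,
    integral_div] at havg
  rw [add_mul, one_mul]
  linarith

end LocalBound

lemma sq_le_weighted_setIntegral_Icc_add_one {f : ℝ → ℝ} (hf : Differentiable ℝ f) {a : ℝ}
    (ha : 0 ≤ a) (hf' : IntegrableOn (fun t => deriv f t ^ 2) (Icc a (a + 1))) {x : ℝ}
    (hx : x ∈ Icc a (a + 1)) :
    f x ^ 2 ≤ (16 * (∫ t in Icc a (a + 1), f t ^ 2 * (1 + t ^ 4)) +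
      ∫ t in Icc a (a + 1), deriv f t ^ 2) / (a + 1) ^ 2 := by
  have hw : 0 < (a + 1) ^ 2 := by positivity
  have hweight : (1 + (a + 1) ^ 2) * (∫ t in Icc a (a + 1), f t ^ 2) ≤
      16 / (a + 1) ^ 2 * ∫ t in Icc a (a + 1), f t ^ 2 * (1 + t ^ 4) := by
    rw [← integral_const_mul, ← integral_const_mul]
    refine setIntegral_mono_on ((hf.continuous.pow 2).integrableOn_Icc.const_mul _)
      (((hf.continuous.pow 2).mul (by fun_prop)).integrableOn_Icc.const_mul _) measurableSet_Icc
      fun t ht => ?_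
    have hpoly : (1 + (a + 1) ^ 2) * (a + 1) ^ 2 ≤ 16 * (1 + t ^ 4) := by
      have : a ^ 4 ≤ t ^ 4 := pow_le_pow_left₀ ha ht.1 4
      nlinarith [sq_nonneg (a ^ 2 - 1), sq_nonneg (a - 1), mul_nonneg ha (sq_nonneg (a - 1))]
    rw [div_mul_eq_mul_div, le_div_iff₀ hw]
    nlinarith [mul_le_mul_of_nonneg_left hpoly (sq_nonneg (f t))]
  calc f x ^ 2 ≤ (1 + (a + 1) ^ 2) * (∫ t in Icc a (a + 1), f t ^ 2) +
        (∫ t in Icc a (a + 1), deriv f t ^ 2) / (a + 1) ^ 2 :=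
        sq_le_setIntegral_Icc_add_one hf hw hf' hx
    _ ≤ 16 / (a + 1) ^ 2 * (∫ t in Icc a (a + 1), f t ^ 2 * (1 + t ^ 4)) +
        (∫ t in Icc a (a + 1), deriv f t ^ 2) / (a + 1) ^ 2 := by gcongr
    _ = _ := by ring

lemma summable_one_div_natCast_add_one_sq : Summable (fun k : ℕ => 1 / ((k : ℝ) + 1) ^ 2) := by
  simpa using (summable_nat_add_iff 1).2 (Real.summable_one_div_nat_pow.2 one_lt_two)

def embeddingConst : ℝ := 4 * √(∑' k : ℕ, 1 / ((k : ℝ) + 1) ^ 2)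

lemma embeddingConst_pos : 0 < embeddingConst := by
  have : 0 < ∑' k : ℕ, 1 / ((k : ℝ) + 1) ^ 2 :=
    summable_one_div_natCast_add_one_sq.tsum_pos (fun k => by positivity) 0 (by norm_num)
  unfold embeddingConst
  positivity

lemma normX_sq {f : ℝ → ℝ} (hf' : MemLp (deriv f) 2 volume) :
    normX f ^ 2 = (∫ x, deriv f x ^ 2) + ∫ x, f x ^ 2 * (1 + x ^ 4) := by
  rw [normX, Real.sq_sqrt (add_nonneg (sq_nonneg _) (integral_nonneg fun x => by positivity)),
    hf'.toReal_eLpNorm_two_sq]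

theorem exists_summable_bound_of_memX {f : ℝ → ℝ} (hf : MemX f) :
    ∃ r : ℕ → ℝ, 0 ≤ r ∧ Summable r ∧ ∑' k, r k ≤ embeddingConst * normX f ∧
      ∀ k : ℕ, ∀ x ∈ Icc (k : ℝ) (k + 1), |f x| ≤ r k := by
  obtain ⟨hdiff, hf2, hf'2, hx2f2⟩ := hf
  have hA := hf'2.integrable_sq
  have hB : Integrable (fun x => f x ^ 2 * (1 + x ^ 4)) :=
    (hf2.integrable_sq.add hx2f2.integrable_sq).congr
      (Eventually.of_forall fun x => by simp only [Pi.add_apply]; ring)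
  obtain ⟨hAs, hA_le⟩ := summable_and_tsum_setIntegral_Icc_natCast_le hA fun x => sq_nonneg _
  obtain ⟨hBs, hB_le⟩ := summable_and_tsum_setIntegral_Icc_natCast_le hB fun x => by positivity
  set q : ℕ → ℝ := fun k => 16 * (∫ y in Icc (k : ℝ) (k + 1), f y ^ 2 * (1 + y ^ 4)) +
    ∫ y in Icc (k : ℝ) (k + 1), deriv f y ^ 2
  have hq0 : 0 ≤ q := fun k => by simp only [q, Pi.zero_apply]; positivity
  have hqs : Summable q := (hBs.mul_left 16).add hAs
  have hq_le : ∑' k, q k ≤ 16 * normX f ^ 2 := by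
    have hint_nonneg : 0 ≤ ∫ x, deriv f x ^ 2 := integral_nonneg fun x => sq_nonneg _
    rw [normX_sq hf'2, (hBs.mul_left 16).tsum_add hAs, tsum_mul_left]
    linarith
  obtain ⟨hrs, hr_le⟩ := Real.summable_and_tsum_sqrt_mul_le hq0 (fun k => by positivity) hqs
    summable_one_div_natCast_add_one_sq
  refine ⟨fun k => √(q k * (1 / ((k : ℝ) + 1) ^ 2)), fun k => Real.sqrt_nonneg _, hrs, ?_,
    fun k x hx => ?_⟩
  · calc ∑' k, √(q k * (1 / ((k : ℝ) + 1) ^ 2))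
        ≤ √(∑' k, q k) * √(∑' k : ℕ, 1 / ((k : ℝ) + 1) ^ 2) := hr_le
      _ ≤ √(4 ^ 2 * normX f ^ 2) * √(∑' k : ℕ, 1 / ((k : ℝ) + 1) ^ 2) := by
        gcongr
        linarith
      _ = embeddingConst * normX f := by
        rw [← mul_pow, Real.sqrt_sq (by unfold normX; positivity), embeddingConst]
        ring
  · rw [← Real.sqrt_sq_eq_abs]
    simp only [q, mul_one_div]
    exact Real.sqrt_le_sqrt
      (sq_le_weighted_setIntegral_Icc_add_one hdiff (Nat.cast_nonneg k) hA.integrableOn hx)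

section UnitIntervals

variable {g : ℝ → ℝ} {r : ℕ → ℝ} (hgr : ∀ k : ℕ, ∀ x ∈ Icc (k : ℝ) (k + 1), |g x| ≤ r k)
include hgr

lemma tsum_iSup_abs_le (hr0 : 0 ≤ r) (hr : Summable r) :
    ∑' k : ℕ, ⨆ x ∈ Icc (k : ℝ) (k + 1), |g x| ≤ ∑' k, r k := by
  have hsup (k : ℕ) : ⨆ x ∈ Icc (k : ℝ) (k + 1), |g x| ≤ r k :=
    Real.iSup_le (fun x => Real.iSup_le (hgr k x) (hr0 k)) (hr0 k)
  have hsup0 (k : ℕ) : 0 ≤ ⨆ x ∈ Icc (k : ℝ) (k + 1), |g x| :=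
    Real.iSup_nonneg fun x => Real.iSup_nonneg fun _ => abs_nonneg _
  exact (hr.of_nonneg_of_le hsup0 hsup).tsum_le_tsum hsup hr

lemma lintegral_enorm_le_tsum_mul_measure_Icc {μ : Measure ℝ} (hμ : μ (Iio 0) = 0) :
    ∫⁻ x, ‖g x‖ₑ ∂μ ≤ ∑' k : ℕ, ENNReal.ofReal (r k) * μ (Icc (k : ℝ) (k + 1)) := by
  have hcover : μ.restrict (⋃ k : ℕ, Icc (k : ℝ) (k + 1)) = μ := by
    refine Measure.restrict_eq_self_of_ae_mem (measure_mono_null (fun x hx => ?_) hμ)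
    by_contra hneg
    exact hx (mem_iUnion.2 ⟨⌊x⌋₊, Nat.floor_le (not_lt.1 hneg), (Nat.lt_floor_add_one x).le⟩)
  calc ∫⁻ x, ‖g x‖ₑ ∂μ = ∫⁻ x in ⋃ k : ℕ, Icc (k : ℝ) (k + 1), ‖g x‖ₑ ∂μ := by rw [hcover]
    _ ≤ ∑' k : ℕ, ∫⁻ x in Icc (k : ℝ) (k + 1), ‖g x‖ₑ ∂μ := lintegral_iUnion_le _ _
    _ ≤ ∑' k : ℕ, ENNReal.ofReal (r k) * μ (Icc (k : ℝ) (k + 1)) := by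
      refine ENNReal.tsum_le_tsum fun k => ?_
      rw [← setLIntegral_const]
      refine setLIntegral_mono measurable_const fun x hx => ?_
      rw [Real.enorm_eq_ofReal_abs]
      exact ENNReal.ofReal_le_ofReal (hgr k x hx)

lemma ofReal_abs_integral_sub_le_mul_iSup (hr0 : 0 ≤ r) (hr : Summable r) {P N : Measure ℝ}
    (hP : P (Iio 0) = 0) (hN : N (Iio 0) = 0) :
    ENNReal.ofReal |(∫ x, g x ∂P) - ∫ x, g x ∂N| ≤
      ENNReal.ofReal (∑' k, r k) * ⨆ x ∈ Ici (0 : ℝ), (P (Icc x (x + 1)) + N (Icc x (x + 1))) := by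
  set M := ⨆ x ∈ Ici (0 : ℝ), (P (Icc x (x + 1)) + N (Icc x (x + 1)))
  have hM (k : ℕ) : P (Icc (k : ℝ) (k + 1)) + N (Icc (k : ℝ) (k + 1)) ≤ M :=
    le_iSup₂ (f := fun x (_ : x ∈ Ici (0 : ℝ)) => P (Icc x (x + 1)) + N (Icc x (x + 1))) (k : ℝ)
      (mem_Ici.2 (Nat.cast_nonneg k))
  calc ENNReal.ofReal |(∫ x, g x ∂P) - ∫ x, g x ∂N|
      ≤ ‖∫ x, g x ∂P‖ₑ + ‖∫ x, g x ∂N‖ₑ := by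
        rw [← Real.enorm_eq_ofReal_abs]
        exact enorm_sub_le
    _ ≤ ∫⁻ x, ‖g x‖ₑ ∂P + ∫⁻ x, ‖g x‖ₑ ∂N :=
      add_le_add (enorm_integral_le_lintegral_enorm _) (enorm_integral_le_lintegral_enorm _)
    _ ≤ ∑' k : ℕ, ENNReal.ofReal (r k) * P (Icc (k : ℝ) (k + 1)) +
        ∑' k : ℕ, ENNReal.ofReal (r k) * N (Icc (k : ℝ) (k + 1)) :=
      add_le_add (lintegral_enorm_le_tsum_mul_measure_Icc hgr hP)
        (lintegral_enorm_le_tsum_mul_measure_Icc hgr hN)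
    _ = ∑' k : ℕ, ENNReal.ofReal (r k) *
          (P (Icc (k : ℝ) (k + 1)) + N (Icc (k : ℝ) (k + 1))) := by
      rw [← ENNReal.tsum_add]
      simp_rw [mul_add]
    _ ≤ ∑' k : ℕ, ENNReal.ofReal (r k) * M := ENNReal.tsum_le_tsum fun k => by gcongr; exact hM k
    _ = ENNReal.ofReal (∑' k, r k) * M := by
      rw [ENNReal.tsum_mul_right, ENNReal.ofReal_tsum_of_nonneg hr0 hr]

end UnitIntervals

/-- The signed measure `ν` is given as `P − N` with `P`, `N` non-negative and supported on
`[0, ∞)`, so that `|ν| ≤ P + N`. -/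
theorem stmt14 :
    ∃ C : ℝ, 0 < C ∧
      (∀ f : ℝ → ℝ, MemX f →
        (∑' k : ℕ, ⨆ x ∈ Icc (k : ℝ) (k + 1), |f x|) ≤ C * normX f) ∧
      (∀ f : ℝ → ℝ, MemX f →
        ∀ P N : Measure ℝ, P (Iio (0 : ℝ)) = 0 → N (Iio (0 : ℝ)) = 0 →
          ENNReal.ofReal |(∫ x, f x ∂P) - ∫ x, f x ∂N| ≤
            ENNReal.ofReal (C * normX f) *
              ⨆ x ∈ Ici (0 : ℝ), (P (Icc x (x + 1)) + N (Icc x (x + 1)))) := by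
  refine ⟨embeddingConst, embeddingConst_pos, fun f hf => ?_, fun f hf P N hP hN => ?_⟩
  · obtain ⟨r, hr0, hr, hrC, hfr⟩ := exists_summable_bound_of_memX hf
    exact (tsum_iSup_abs_le hfr hr0 hr).trans hrC
  · obtain ⟨r, hr0, hr, hrC, hfr⟩ := exists_summable_bound_of_memX hf
    refine (ofReal_abs_integral_sub_le_mul_iSup hfr hr0 hr hP hN).trans ?_
    gcongr

end
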